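/- arXiv:2302.03252 — 6 statements merged into one kernel-verified Lean document; each statement's English description precedes it below -/
import Mathlib

section
/- If a mixed graph G is bipartite (i.e., its underlying graph is bipartite), then for every angle θ ∈ (0, π] the θ-Hermitian adjacency matrix H_θ(G) has a spectrum symmetric about the origin: λ is an eigenvalue of H_θ(G) with multiplicity k if and only if -λ is an eigenvalue with multiplicity k. -/
open Polynomial Matrix Real

lemma rootMult_comp_neg (p : ℂ[X]) (hp : p ≠ 0) (μ : ℂ) :
    (p.comp (-X)).rootMultiplicity μ = p.rootMultiplicity (-μ) := by
  have hc : p.comp (-X) ≠ 0 := by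
    intro h
    apply hp
    have := congrArg (fun q => q.comp (-X : ℂ[X])) h
    simpa [Polynomial.comp_neg_X_comp_neg_X] using this
  have key : ∀ k : ℕ, ((X - C μ) ^ k ∣ p.comp (-X)) ↔ ((X - C (-μ)) ^ k ∣ p) := by
    intro k
    rw [Polynomial.dvd_comp_neg_X_iff]
    have : ((X - C μ) ^ k).comp (-X) = (-1 : ℂ[X]) ^ k * (X - C (-μ)) ^ k := by
      rw [pow_comp, sub_comp, X_comp, C_comp, ← mul_pow]
      rw [neg_mul, one_mul, map_neg]
      ring_nf
    rw [this]
    exact (isUnit_one.neg.pow k).mul_left_dvd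
  apply le_antisymm
  · rw [Polynomial.le_rootMultiplicity_iff hp, ← key]
    exact Polynomial.pow_rootMultiplicity_dvd _ _
  · rw [Polynomial.le_rootMultiplicity_iff hc, key]
    exact Polynomial.pow_rootMultiplicity_dvd _ _

lemma charpoly_conj_invol {n : ℕ} (D M : Matrix (Fin n) (Fin n) ℂ) (hD : D * D = 1) :
    (D * M * D).charpoly = M.charpoly := by
  have hmap : (D.map (C : ℂ → ℂ[X])) * (D.map C) = 1 := by
    rw [← Matrix.map_mul, hD]
    simp [Matrix.map_one]
  have hscal : D.map (C : ℂ → ℂ[X]) * (scalar (Fin n) X) * D.map C = scalar (Fin n) X := by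
    rw [(scalar_commute (X : ℂ[X]) (fun r' => Commute.all _ _) (D.map C)).symm.eq,
      mul_assoc, hmap, mul_one]
  have key : charmatrix (D * M * D) = (D.map C) * charmatrix M * (D.map C) := by
    simp only [charmatrix, RingHom.mapMatrix_apply]
    rw [mul_sub, sub_mul]
    congr 1
    · exact hscal.symm
    · rw [Matrix.map_mul, Matrix.map_mul]
  rw [Matrix.charpoly, key, det_mul, det_mul, Matrix.charpoly]
  have hd : (D.map (C : ℂ → ℂ[X])).det * (D.map C).det = 1 := by
    rw [← det_mul, hmap, det_one]
  calc (D.map (C : ℂ → ℂ[X])).det * (charmatrix M).det * (D.map C).det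
      = ((D.map C).det * (D.map C).det) * (charmatrix M).det := by ring
    _ = (charmatrix M).det := by rw [hd, one_mul]

lemma charpoly_neg' {n : ℕ} (M : Matrix (Fin n) (Fin n) ℂ) :
    (-M).charpoly = (-1 : ℂ[X]) ^ n * M.charpoly.comp (-X) := by
  have hcomp : M.charpoly.comp (-X) =
      (((Polynomial.aeval (-X : ℂ[X])).toRingHom).mapMatrix (charmatrix M)).det := by
    rw [Matrix.charpoly, ← RingHom.map_det]
    rfl
  have hmat : ((Polynomial.aeval (-X : ℂ[X])).toRingHom).mapMatrix (charmatrix M)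
      = -(charmatrix (-M)) := by
    ext i j
    by_cases h : i = j
    · subst h
      simp [RingHom.mapMatrix_apply, Matrix.map_apply, charmatrix_apply_eq]
      ring
    · simp [RingHom.mapMatrix_apply, Matrix.map_apply, charmatrix_apply_ne _ _ _ h]
  rw [hcomp, hmat, Matrix.det_neg, Matrix.charpoly, Fintype.card_fin]
  rw [← mul_assoc, ← pow_add, Even.neg_one_pow ⟨n, rfl⟩, one_mul]

/-- The θ-Hermitian adjacency matrix of a mixed graph on `Fin n` with arc
relation `A` (no loops). -/
noncomputable def MGHerm {n : ℕ} (A : Fin n → Fin n → Bool) (θ : ℝ) : Matrix (Fin n) (Fin n) ℂ :=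
  fun x y =>
    if A x y ∧ A y x then 1
    else if A x y then Complex.exp (θ * Complex.I)
    else if A y x then Complex.exp (-θ * Complex.I)
    else 0

/-- A mixed graph is bipartite if its underlying graph is bipartite. -/
def MGBipartite {n : ℕ} (A : Fin n → Fin n → Bool) : Prop :=
  ∃ S : Set (Fin n), ∀ x y : Fin n, (A x y ∨ A y x) → (x ∈ S ↔ y ∉ S)

/-- The spectrum of `M` (as a root multiset of its characteristic polynomial)
is symmetric with respect to the origin, with multiplicities. -/
def SymSpec {n : ℕ} (M : Matrix (Fin n) (Fin n) ℂ) : Prop :=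
  ∀ μ : ℂ, M.charpoly.rootMultiplicity μ = M.charpoly.rootMultiplicity (-μ)

theorem bipartite_implies_symmetric_spectrum {n : ℕ} (A : Fin n → Fin n → Bool)
    (hA : ∀ v, A v v = false) (hbip : MGBipartite A) :
    ∀ θ ∈ Set.Ioc (0 : ℝ) Real.pi, SymSpec (MGHerm A θ) := by
  classical
  obtain ⟨S, hS⟩ := hbip
  intro θ _ μ
  set M := MGHerm A θ with hM
  set d : Fin n → ℂ := fun i => if i ∈ S then 1 else -1 with hd
  set D := Matrix.diagonal d with hDdef
  have hDD : D * D = 1 := by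
    rw [hDdef, Matrix.diagonal_mul_diagonal]
    convert Matrix.diagonal_one with i
    by_cases h : i ∈ S <;> simp [hd, h]
  have hconj : D * M * D = -M := by
    ext i j
    have h1 : (D * M * D) i j = d i * M i j * d j := by
      rw [hDdef, Matrix.mul_apply]
      simp [Matrix.mul_apply, Matrix.diagonal_apply, Finset.sum_ite_eq, Finset.sum_ite_eq']
    rw [h1]
    by_cases h : A i j ∨ A j i
    · have hij := hS i j h
      have hdd : d i * d j = -1 := by
        by_cases hi : i ∈ S
        · have hj : j ∉ S := hij.mp hi
          simp [hd, hi, hj]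
        · have hj : j ∈ S := by by_contra hj; exact hi (hij.mpr hj)
          simp [hd, hi, hj]
      calc d i * M i j * d j = (d i * d j) * M i j := by ring
        _ = -M i j := by rw [hdd]; ring
        _ = (-M) i j := rfl
    · push_neg at h
      have hMij : M i j = 0 := by
        simp only [hM, MGHerm, h.1, h.2]
        simp
      simp [hMij]
  have hcp : M.charpoly = (-M).charpoly := by
    rw [← hconj, charpoly_conj_invol D M hDD]
  have hne : M.charpoly ≠ 0 := M.charpoly_monic.ne_zero
  calc M.charpoly.rootMultiplicity μ
      = (-M).charpoly.rootMultiplicity μ := by rw [← hcp]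
    _ = ((-1 : ℂ[X]) ^ n * M.charpoly.comp (-X)).rootMultiplicity μ := by rw [charpoly_neg']
    _ = (M.charpoly.comp (-X)).rootMultiplicity μ := by
        rw [show ((-1 : ℂ[X]) ^ n) = C ((-1 : ℂ) ^ n) by simp,
          Polynomial.rootMultiplicity_mul (by
            intro hz
            apply hne
            have : M.charpoly.comp (-X) = 0 := by
              by_contra hc
              exact absurd hz (mul_ne_zero (by simp) hc)
            have := congrArg (fun q => q.comp (-X : ℂ[X])) this
            simpa [Polynomial.comp_neg_X_comp_neg_X] using this),
          Polynomial.rootMultiplicity_C, zero_add]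
    _ = M.charpoly.rootMultiplicity (-μ) := rootMult_comp_neg _ hne _
end

section
/- Let θ ∈ (0, π] be such that cos θ is transcendental. If a mixed graph G is non-bipartite, then the spectrum of H_θ(G) is not symmetric with respect to the origin. Consequently, for such θ, a mixed graph is bipartite if and only if its H_θ-spectrum is symmetric about the origin. -/
open Polynomial Matrix Real

/-!
Odd powers of a Hermitian matrix whose spectrum is symmetric about `0` have trace zero.
Write `e^{iθ} • H_θ(G) = Q(e^{iθ})` for a matrix `Q` over `ℚ[X]`. For odd `k` the polynomial
`tr (Q ^ k)` then vanishes at `e^{iθ}`, while its value at `1` counts the closed walks of length `k`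
in the underlying graph, which is nonzero once `G` is not bipartite. So `e^{iθ}`, and with it
`cos θ = (e^{iθ} + e^{-iθ}) / 2`, would be algebraic. Conversely, a bipartition gives a `±1`
diagonal matrix `D` with `D H D = -H`, so `H` and `-H` have the same characteristic polynomial.
-/

namespace Matrix

variable {n R : Type*} [Fintype n] [DecidableEq n]

lemma charpoly_comp_neg_X [CommRing R] (M : Matrix n n R) :
    M.charpoly.comp (-X) = (-1) ^ Fintype.card n * (-M).charpoly := by
  have : (compRingHom (-X : R[X])).mapMatrix M.charmatrix = -(-M).charmatrix := by
    ext i j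
    by_cases h : i = j
    · subst h; simp [charmatrix_apply_eq, sub_eq_add_neg, add_comm]
    · simp [charmatrix_apply_ne _ _ _ h]
  rw [charpoly, charpoly, ← coe_compRingHom_apply, RingHom.map_det, this, det_neg]

lemma roots_charpoly_neg [CommRing R] [IsDomain R] (M : Matrix n n R) :
    (-M).charpoly.roots = M.charpoly.roots.map Neg.neg := by
  rw [← roots_comp_neg_X, charpoly_comp_neg_X]
  rcases neg_one_pow_eq_or R[X] (Fintype.card n) with h | h <;> simp [h]

lemma charpoly_neg_of_bipartite [CommRing R] (M : Matrix n n R) (S : Set n)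
    (hS : ∀ x y, (x ∈ S ↔ y ∈ S) → M x y = 0) : (-M).charpoly = M.charpoly := by
  classical
  set D : Matrix n n R := diagonal fun x => if x ∈ S then 1 else -1
  have hDD : D * D = 1 := by
    rw [diagonal_mul_diagonal, ← diagonal_one]
    congr 1; funext x
    split_ifs <;> simp
  have hconj : D * M * D = -M := by
    ext x y
    by_cases hxy : x ∈ S ↔ y ∈ S
    · simp [D, hS x y hxy]
    · by_cases hx : x ∈ S <;> simp_all [D]
  rw [← hconj, charpoly_mul_comm, ← mul_assoc, hDD, one_mul]

lemma IsHermitian.trace_pow_eq_sum_roots {𝕜 : Type*} [RCLike 𝕜] {M : Matrix n n 𝕜}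
    (hM : M.IsHermitian) (k : ℕ) : (M ^ k).trace = (M.charpoly.roots.map (· ^ k)).sum := by
  conv_lhs => rw [hM.spectral_theorem, ← map_pow, trace_map, diagonal_pow, trace_diagonal]
  simp [hM.roots_charpoly_eq_eigenvalues]

lemma map_trace_pow {S F : Type*} [CommSemiring R] [CommSemiring S] [FunLike F R S]
    [RingHomClass F R S] (f : F) (M : Matrix n n R) (k : ℕ) :
    f (M ^ k).trace = ((M.map f) ^ k).trace := by
  rw [AddMonoidHom.map_trace]
  exact congrArg trace (map_pow (RingHom.mapMatrix (f : R →+* S)) M k)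

end Matrix

lemma Multiset.sum_map_pow_eq_zero_of_map_neg {R : Type*} [Ring R] [NoZeroDivisors R] [CharZero R]
    {s : Multiset R} (hs : s.map Neg.neg = s) {k : ℕ} (hk : Odd k) : (s.map (· ^ k)).sum = 0 := by
  have : (s.map (· ^ k)).sum = -(s.map (· ^ k)).sum := by
    conv_lhs => rw [← hs, Multiset.map_map]
    simp [hk.neg_pow, Multiset.sum_map_neg]
  exact self_eq_neg.mp this

lemma symSpec_iff_roots_map_neg {n : ℕ} (M : Matrix (Fin n) (Fin n) ℂ) :
    SymSpec M ↔ M.charpoly.roots.map Neg.neg = M.charpoly.roots := by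
  classical
  rw [SymSpec, Multiset.ext]
  refine forall_congr' fun μ => ?_
  rw [← count_roots, ← count_roots, ← Multiset.count_map_eq_count' _ _ neg_injective (-μ), neg_neg]
  exact eq_comm

lemma SymSpec.trace_pow_eq_zero {n : ℕ} {M : Matrix (Fin n) (Fin n) ℂ} (hs : SymSpec M)
    (hM : M.IsHermitian) {k : ℕ} (hk : Odd k) : (M ^ k).trace = 0 := by
  rw [hM.trace_pow_eq_sum_roots,
    Multiset.sum_map_pow_eq_zero_of_map_neg ((symSpec_iff_roots_map_neg M).mp hs) hk]

lemma SimpleGraph.exists_odd_trace_adjMatrix_pow_ne_zero {V R : Type*} [Fintype V] [DecidableEq V]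
    [Semiring R] [CharZero R] (G : SimpleGraph V) [DecidableRel G.Adj] (h : ¬ G.Colorable 2) :
    ∃ k, Odd k ∧ (G.adjMatrix R ^ k).trace ≠ 0 := by
  obtain ⟨u, w, hw⟩ : ∃ u, ∃ w : G.Walk u u, ¬ Even w.length := by
    simpa [two_colorable_iff_forall_loop_even] using h
  refine ⟨w.length, Nat.not_even_iff_odd.mp hw, ?_⟩
  simp only [trace, diag, adjMatrix_pow_apply_eq_card_walk]
  norm_cast
  rw [Finset.sum_eq_zero_iff]
  intro hzero
  exact (Fintype.card_pos_iff.mpr ⟨(⟨w, rfl⟩ : {p : G.Walk u u // p.length = w.length})⟩).ne'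
    (hzero u (Finset.mem_univ u))

lemma isAlgebraic_cos_of_isAlgebraic_exp_mul_I {θ : ℝ}
    (h : IsAlgebraic ℚ (Complex.exp (θ * Complex.I))) : IsAlgebraic ℚ (Real.cos θ) := by
  have hcos : ((Real.cos θ : ℝ) : ℂ) = (2⁻¹ : ℚ) •
      (Complex.exp (θ * Complex.I) + (Complex.exp (θ * Complex.I))⁻¹) := by
    rw [Complex.ofReal_cos, Complex.cos, ← Complex.exp_neg, Rat.smul_def]
    push_cast
    ring_nf
  rw [← isAlgebraic_algHom_iff (Complex.ofRealAm.restrictScalars ℚ) Complex.ofReal_injective]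
  change IsAlgebraic ℚ ((Real.cos θ : ℝ) : ℂ)
  rw [hcos]
  exact (h.add (IsAlgebraic.inv_iff.mpr h)).smul _

section MixedGraph

variable {n : ℕ} (A : Fin n → Fin n → Bool)

lemma mgHerm_isHermitian (θ : ℝ) : (MGHerm A θ).IsHermitian := by
  ext x y
  by_cases hxy : A x y <;> by_cases hyx : A y x <;>
    simp [MGHerm, hxy, hyx, ← Complex.exp_conj]

lemma mgHerm_apply_eq_zero {θ : ℝ} {x y : Fin n} (h : ¬ (A x y ∨ A y x)) : MGHerm A θ x y = 0 := by
  simp_all [MGHerm]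

lemma symSpec_mgHerm_of_bipartite (θ : ℝ) (h : MGBipartite A) : SymSpec (MGHerm A θ) := by
  obtain ⟨S, hS⟩ := h
  rw [symSpec_iff_roots_map_neg, ← roots_charpoly_neg, charpoly_neg_of_bipartite _ S]
  intro x y hxy
  exact mgHerm_apply_eq_zero A fun h => by have := hS x y h; tauto

def underlyingGraph : SimpleGraph (Fin n) := SimpleGraph.fromRel fun x y => A x y

lemma underlyingGraph_adj (hA : ∀ v, A v v = false) {x y : Fin n} :
    (underlyingGraph A).Adj x y ↔ A x y ∨ A y x := by
  refine ⟨fun h => h.2, fun h => ⟨?_, h⟩⟩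
  rintro rfl
  simp [hA] at h

lemma mgBipartite_of_colorable (hA : ∀ v, A v v = false) (h : (underlyingGraph A).Colorable 2) :
    MGBipartite A := by
  obtain ⟨c⟩ := h
  refine ⟨{x | c x = 0}, fun x y hxy => ?_⟩
  have := c.valid ((underlyingGraph_adj A hA).mpr hxy)
  simp only [Set.mem_ofPred_eq]
  omega

/-- `e^{iθ} • MGHerm A θ` with `e^{iθ}` replaced by `X`; the factor `e^{iθ}` clears the negative
power `e^{-iθ}`. -/
noncomputable def arcPolyMatrix : Matrix (Fin n) (Fin n) ℚ[X] := fun x y =>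
  if A x y ∧ A y x then X else if A x y then X ^ 2 else if A y x then 1 else 0

lemma arcPolyMatrix_map_aeval (θ : ℝ) :
    (arcPolyMatrix A).map (aeval (Complex.exp (θ * Complex.I))) =
      Complex.exp (θ * Complex.I) • MGHerm A θ := by
  ext x y
  by_cases hxy : A x y <;> by_cases hyx : A y x <;>
    simp [arcPolyMatrix, MGHerm, hxy, hyx, sq, ← Complex.exp_add]

lemma arcPolyMatrix_map_eval_one (hA : ∀ v, A v v = false) [DecidableRel (underlyingGraph A).Adj] :
    (arcPolyMatrix A).map (eval 1) = (underlyingGraph A).adjMatrix ℚ := by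
  ext x y
  simp only [map_apply, SimpleGraph.adjMatrix_apply, underlyingGraph_adj A hA]
  by_cases hxy : A x y <;> by_cases hyx : A y x <;> simp [arcPolyMatrix, hxy, hyx]

theorem not_symSpec_mgHerm_of_not_bipartite {θ : ℝ} (htr : Transcendental ℚ (Real.cos θ))
    (hA : ∀ v, A v v = false) (hnb : ¬ MGBipartite A) : ¬ SymSpec (MGHerm A θ) := by
  classical
  intro hs
  obtain ⟨k, hk, htrace⟩ := (underlyingGraph A).exists_odd_trace_adjMatrix_pow_ne_zero (R := ℚ)
    (mt (mgBipartite_of_colorable A hA) hnb)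
  refine htr (isAlgebraic_cos_of_isAlgebraic_exp_mul_I ⟨((arcPolyMatrix A) ^ k).trace, ?_, ?_⟩)
  · intro h0
    apply htrace
    rw [← arcPolyMatrix_map_eval_one A hA, ← coe_evalRingHom, ← map_trace_pow, h0, map_zero]
  · rw [map_trace_pow, arcPolyMatrix_map_aeval, _root_.smul_pow, trace_smul,
      hs.trace_pow_eq_zero (mgHerm_isHermitian A θ) hk, smul_zero]

end MixedGraph

theorem bipartite_detection_of_cos_transcendental_general (θ : ℝ)
    (htr : Transcendental ℚ (Real.cos θ)) {n : ℕ} (A : Fin n → Fin n → Bool)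
    (hA : ∀ v, A v v = false) :
    (¬ MGBipartite A → ¬ SymSpec (MGHerm A θ)) ∧ (MGBipartite A ↔ SymSpec (MGHerm A θ)) := by
  have hdetect := not_symSpec_mgHerm_of_not_bipartite A htr hA
  exact ⟨hdetect, symSpec_mgHerm_of_bipartite A θ, not_imp_not.mp hdetect⟩

theorem bipartite_detection_of_cos_transcendental (θ : ℝ) (hθ : θ ∈ Set.Ioc (0 : ℝ) Real.pi)
    (htr : Transcendental ℚ (Real.cos θ)) {n : ℕ} (A : Fin n → Fin n → Bool)
    (hA : ∀ v, A v v = false) :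
    (¬ MGBipartite A → ¬ SymSpec (MGHerm A θ)) ∧ (MGBipartite A ↔ SymSpec (MGHerm A θ)) :=
  bipartite_detection_of_cos_transcendental_general θ htr A hA
end

section
/- For every θ ∈ (0, π], each coefficient a_j of the characteristic polynomial det(xI − H_θ(G)) = Σ_j a_j x^{n-j} of a θ-Hermitian adjacency matrix lies in the subring ℤ[cos θ] of ℝ; i.e., there is an integer polynomial f_j with a_j = f_j(cos θ). -/
open Polynomial Matrix Real

/-!
The entries of `H_θ(G)` are `0`, `1`, `c = e^{iθ}` and `c̄ = 2 cos θ - c`, and `c² = 2 cos θ · c - 1`.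
Hence they lie in the ring `ℤ[cos θ] + ℤ[cos θ] c`, and so do the coefficients of the
characteristic polynomial. These coefficients are real because `H_θ(G)` is Hermitian, and the real
part of `a + b c` with `a, b ∈ ℤ[cos θ]` is `a + b cos θ ∈ ℤ[cos θ]`.
-/

namespace Matrix

variable {n R : Type*} [Fintype n] [DecidableEq n] [CommRing R]

theorem coeff_charpoly_mem_of_forall_mem {S : Subring R} {M : Matrix n n R}
    (h : ∀ i j, M i j ∈ S) (k : ℕ) : M.charpoly.coeff k ∈ S := by
  let M' : Matrix n n S := fun i j => ⟨M i j, h i j⟩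
  have hM : M'.map S.subtype = M := rfl
  rw [← hM, charpoly_map, coeff_map]
  exact (M'.charpoly.coeff k).2

theorem IsHermitian.star_coeff_charpoly [StarRing R] {M : Matrix n n R} (hM : M.IsHermitian)
    (k : ℕ) : star (M.charpoly.coeff k) = M.charpoly.coeff k := by
  have hstar : M.map (starRingEnd R) = Mᵀ := by
    ext i j
    exact hM.apply j i
  have := congrArg (coeff · k) (charpoly_map M (starRingEnd R))
  simpa [hstar, charpoly_transpose, starRingEnd_apply] using this.symm

end Matrix

namespace Subring

variable {A : Type*} [CommRing A]

def quadraticAdjoin (S : Subring A) {c s u : A} (hs : s ∈ S) (hu : u ∈ S)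
    (hc : c ^ 2 = s * c + u) : Subring A where
  carrier := {z | ∃ a ∈ S, ∃ b ∈ S, z = a + b * c}
  zero_mem' := ⟨0, S.zero_mem, 0, S.zero_mem, by ring⟩
  one_mem' := ⟨1, S.one_mem, 0, S.zero_mem, by ring⟩
  add_mem' := by
    rintro _ _ ⟨a, ha, b, hb, rfl⟩ ⟨a', ha', b', hb', rfl⟩
    exact ⟨a + a', S.add_mem ha ha', b + b', S.add_mem hb hb', by ring⟩
  neg_mem' := by
    rintro _ ⟨a, ha, b, hb, rfl⟩
    exact ⟨-a, S.neg_mem ha, -b, S.neg_mem hb, by ring⟩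
  mul_mem' := by
    rintro _ _ ⟨a, ha, b, hb, rfl⟩ ⟨a', ha', b', hb', rfl⟩
    refine ⟨a * a' + b * b' * u, ?_, a * b' + b * a' + b * b' * s, ?_, ?_⟩
    · exact S.add_mem (S.mul_mem ha ha') (S.mul_mem (S.mul_mem hb hb') hu)
    · exact S.add_mem (S.add_mem (S.mul_mem ha hb') (S.mul_mem hb ha'))
        (S.mul_mem (S.mul_mem hb hb') hs)
    · linear_combination (b * b') * hc

variable {S : Subring A} {c s u : A} (hs : s ∈ S) (hu : u ∈ S) (hc : c ^ 2 = s * c + u)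

theorem self_mem_quadraticAdjoin : c ∈ S.quadraticAdjoin hs hu hc :=
  ⟨0, S.zero_mem, 1, S.one_mem, by ring⟩

theorem sub_self_mem_quadraticAdjoin : s - c ∈ S.quadraticAdjoin hs hu hc :=
  ⟨s, hs, -1, S.neg_mem S.one_mem, by ring⟩

end Subring

theorem Complex.re_mem_of_mem_quadraticAdjoin {R : Subring ℝ} {c s u : ℂ}
    {hs : s ∈ R.map ofRealHom} {hu : u ∈ R.map ofRealHom} {hc : c ^ 2 = s * c + u}
    (hre : c.re ∈ R) {z : ℂ} (hz : z ∈ (R.map ofRealHom).quadraticAdjoin hs hu hc) :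
    z.re ∈ R := by
  obtain ⟨_, ⟨a, ha, rfl⟩, _, ⟨b, hb, rfl⟩, rfl⟩ := hz
  simpa using R.add_mem ha (R.mul_mem hb hre)

open Complex in
theorem Complex.exp_mul_I_sq (θ : ℝ) :
    exp (θ * I) ^ 2 = 2 * Real.cos θ * exp (θ * I) - 1 := by
  have h : exp (θ * I) * exp (-θ * I) = 1 := by rw [← exp_add]; simp
  rw [ofReal_cos, two_cos]
  linear_combination -h

open Complex in
theorem Complex.exp_neg_mul_I (θ : ℝ) : exp (-θ * I) = 2 * Real.cos θ - exp (θ * I) := by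
  rw [ofReal_cos, two_cos]
  ring

theorem isHermitian_MGHerm {n : ℕ} (A : Fin n → Fin n → Bool) (θ : ℝ) :
    (MGHerm A θ).IsHermitian := by
  have hconj (t : ℝ) : star (Complex.exp (t * Complex.I)) = Complex.exp (-(t * Complex.I)) := by
    rw [Complex.star_def, ← Complex.exp_conj]
    simp
  ext x y
  by_cases hxy : A x y <;> by_cases hyx : A y x <;>
    simp [MGHerm, hxy, hyx, hconj, ← neg_mul, ← Complex.ofReal_neg]

theorem MGHerm_apply_mem {n : ℕ} (A : Fin n → Fin n → Bool) (θ : ℝ) {S : Subring ℂ}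
    (h : Complex.exp (θ * Complex.I) ∈ S) (h' : Complex.exp (-θ * Complex.I) ∈ S) (x y : Fin n) :
    MGHerm A θ x y ∈ S := by
  unfold MGHerm
  split_ifs
  exacts [S.one_mem, h, h', S.zero_mem]

theorem charpoly_coeff_mem_int_adjoin_cos_general {n : ℕ} (A : Fin n → Fin n → Bool)
    (θ : ℝ) (j : ℕ) :
    ∃ f : Polynomial ℤ,
      (MGHerm A θ).charpoly.coeff (n - j) =
        ((Polynomial.eval₂ (Int.castRingHom ℝ) (Real.cos θ) f : ℝ) : ℂ) := by
  set R := (Algebra.adjoin ℤ {Real.cos θ}).toSubring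
  have hcos : Real.cos θ ∈ R := Algebra.subset_adjoin rfl
  have hs : 2 * (Real.cos θ : ℂ) ∈ R.map Complex.ofRealHom :=
    Subring.mem_map.mpr ⟨_, R.mul_mem (ofNat_mem R 2) hcos, by simp⟩
  set T := (R.map Complex.ofRealHom).quadraticAdjoin hs (neg_mem (one_mem _))
    (Complex.exp_mul_I_sq θ)
  have hentries : ∀ x y, MGHerm A θ x y ∈ T := MGHerm_apply_mem A θ
    (Subring.self_mem_quadraticAdjoin ..)
    (Complex.exp_neg_mul_I θ ▸ Subring.sub_self_mem_quadraticAdjoin ..)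
  have hre : ((MGHerm A θ).charpoly.coeff (n - j)).re ∈ Algebra.adjoin ℤ {Real.cos θ} :=
    Complex.re_mem_of_mem_quadraticAdjoin (by simpa using hcos)
      (coeff_charpoly_mem_of_forall_mem hentries _)
  rw [Algebra.adjoin_singleton_eq_range_aeval] at hre
  obtain ⟨f, hf⟩ := hre
  refine ⟨f, ?_⟩
  rw [← Complex.conj_eq_iff_re.mp ((isHermitian_MGHerm A θ).star_coeff_charpoly _), ← hf,
    AlgHom.toRingHom_eq_coe, AlgHom.coe_toRingHom, aeval_def, algebraMap_int_eq]

theorem charpoly_coeff_mem_int_adjoin_cos {n : ℕ} (A : Fin n → Fin n → Bool)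
    (hA : ∀ v, A v v = false) (θ : ℝ) (hθ : θ ∈ Set.Ioc (0 : ℝ) Real.pi) (j : ℕ) :
    ∃ f : Polynomial ℤ,
      (MGHerm A θ).charpoly.coeff (n - j) =
        ((Polynomial.eval₂ (Int.castRingHom ℝ) (Real.cos θ) f : ℝ) : ℂ) :=
  charpoly_coeff_mem_int_adjoin_cos_general A θ j
end

section
/- Let p be an odd prime, l an integer coprime to p, and θ = (l/p)π. If nonnegative integers s_1, …, s_{(p−1)/2} satisfy Σ_{j=1}^{(p−1)/2} s_j cos((2j−1)θ) = 0, then s_1 = s_2 = ⋯ = s_{(p−1)/2} = 0. -/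
open Complex Polynomial Finset Real

theorem odd_prime_cos_combination_trivial (p : ℕ) (hp : p.Prime) (hodd : Odd p)
    (l : ℤ) (hl : IsCoprime l (p : ℤ)) (θ : ℝ) (hθ : θ = (l : ℝ) / p * Real.pi)
    (s : ℕ → ℕ)
    (h : ∑ j ∈ Finset.range ((p - 1) / 2), (s j : ℝ) * Real.cos ((2 * j + 1) * θ) = 0) :
    ∀ j < (p - 1) / 2, s j = 0 := by
  obtain ⟨m, hm⟩ := hodd
  have hp3 : 3 ≤ p := by have := hp.two_le; omega
  have hm1 : 1 ≤ m := by omega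
  have hNm : (p - 1) / 2 = m := by omega
  rw [hNm] at h ⊢
  have hpC : (p : ℂ) ≠ 0 := by exact_mod_cast hp.pos.ne'
  have hpm : (p : ℂ) = 2 * (m : ℂ) + 1 := by exact_mod_cast congrArg (Nat.cast : ℕ → ℂ) hm
  set η : ℂ := Complex.exp (2 * Real.pi * I / p) with hηdef
  have hη : IsPrimitiveRoot η p := Complex.isPrimitiveRoot_exp p hp.pos.ne'
  have hη0 : η ≠ 0 := by
    intro hc; have := hη.pow_eq_one; rw [hc] at this; simp [hp.pos.ne'] at this
  set e : ℕ → ℤ := fun j => (2 * j + 1) * l * (m + 1) with hedef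
  have hzexp : ∀ n : ℤ, η ^ n = Complex.exp (n * (2 * Real.pi * I / p)) := by
    intro n; rw [Complex.exp_int_mul]
  have hneg : ∀ n : ℤ, ((-1 : ℂ)) ^ n = Complex.exp (n * (Real.pi * I)) := by
    intro n; rw [Complex.exp_int_mul, Complex.exp_pi_mul_I]
  have hθC : (θ : ℂ) = (l : ℂ) / p * Real.pi := by rw [hθ]; push_cast; ring
  have hcos : ∀ j : ℕ, (Real.cos ((2 * j + 1) * θ) : ℂ) * (2 * (-1 : ℂ) ^ l) =
      η ^ e j + η ^ (-e j) := by
    intro j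
    have h1 : ((-1 : ℂ)) ^ ((2 * (j:ℤ) + 1) * l) = (-1 : ℂ) ^ l := by
      rcases Int.even_or_odd l with hev | hod
      · rw [hev.neg_one_zpow, Even.neg_one_zpow (hev.mul_left _)]
      · rw [hod.neg_one_zpow, Odd.neg_one_zpow]
        exact (odd_two_mul_add_one (j:ℤ)).mul hod
    have key : Complex.exp (((2 * j + 1) * θ : ℝ) * I) * (-1 : ℂ) ^ ((2 * (j:ℤ) + 1) * l)
        = η ^ e j := by
      rw [hneg, hzexp, ← Complex.exp_add]
      congr 1
      simp only [hedef]
      push_cast [hθC]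
      field_simp
      rw [hpm]; ring
    have hshift : ∀ (d k : ℤ), η ^ (d + (p:ℤ) * k) = η ^ d := by
      intro d k
      rw [zpow_add₀ hη0, zpow_mul, show ((p:ℤ)) = ((p:ℕ):ℤ) from rfl, zpow_natCast,
        hη.pow_eq_one, one_zpow, mul_one]
    have key' : Complex.exp (-(((2 * j + 1) * θ : ℝ) : ℂ) * I) * (-1 : ℂ) ^ ((2 * (j:ℤ) + 1) * l)
        = η ^ (-e j) := by
      have h2 : η ^ (-e j) = η ^ ((2 * (j:ℤ) + 1) * l * m) := by
        rw [show ((2 * (j:ℤ) + 1) * l * m) = -e j + (p:ℤ) * ((2 * j + 1) * l) from by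
          simp only [hedef]; push_cast [hm]; ring, hshift]
      rw [h2, hneg, hzexp, ← Complex.exp_add]
      congr 1
      push_cast [hθC]
      field_simp
      rw [hpm]; ring
    rw [Complex.ofReal_cos]
    calc (Complex.cos ((2 * j + 1) * θ : ℝ)) * (2 * (-1 : ℂ) ^ l)
        = (2 * Complex.cos ((2 * j + 1) * θ : ℝ)) * (-1 : ℂ) ^ ((2 * (j:ℤ) + 1) * l) := by
          rw [h1]; ring
      _ = η ^ e j + η ^ (-e j) := by
          rw [Complex.two_cos, add_mul, key, key']
  have hC : ∑ j ∈ Finset.range m, (s j : ℂ) * (Real.cos ((2 * j + 1) * θ) : ℂ) = 0 := by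
    have := congrArg (Complex.ofReal) h
    push_cast at this
    convert this using 2 with j
    push_cast
    ring
  have hsum : ∑ j ∈ Finset.range m, (s j : ℂ) * (η ^ e j + η ^ (-e j)) = 0 := by
    have heq : ∑ j ∈ Finset.range m, (s j : ℂ) * (η ^ e j + η ^ (-e j)) =
        (∑ j ∈ Finset.range m, (s j : ℂ) * (Real.cos ((2 * j + 1) * θ) : ℂ)) *
          (2 * (-1 : ℂ) ^ l) := by
      rw [Finset.sum_mul]
      refine Finset.sum_congr rfl fun j _ => ?_
      rw [mul_assoc, hcos j]
    rw [heq, hC, zero_mul]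
  have hzmod : ∀ n : ℤ, η ^ ((n % (p : ℤ)).toNat) = η ^ n := by
    intro n
    have h0 : (0:ℤ) ≤ n % p := Int.emod_nonneg n (by exact_mod_cast hp.pos.ne')
    conv_rhs => rw [show n = (p:ℤ) * (n / p) + n % p from (Int.mul_ediv_add_emod n p).symm]
    rw [zpow_add₀ hη0, zpow_mul]
    rw [show ((p:ℤ)) = ((p:ℕ):ℤ) from rfl, zpow_natCast, hη.pow_eq_one]
    rw [one_zpow, one_mul, ← zpow_natCast, Int.toNat_of_nonneg h0]
  have hndvd : ∀ j < m, ¬ ((p:ℤ) ∣ e j) := by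
    intro j hj hdvd
    have hpI : Prime (p : ℤ) := Nat.prime_iff_prime_int.mp hp
    rcases (hpI.dvd_mul.mp hdvd) with h1 | h1
    · rcases hpI.dvd_mul.mp h1 with h2 | h2
      · have := Int.le_of_dvd (by positivity) h2
        omega
      · exact absurd (IsCoprime.isUnit_of_dvd' hl h2 dvd_rfl) hpI.not_unit
    · have h3 : (p:ℤ) ∣ ((m + 1 : ℕ) : ℤ) := by exact_mod_cast h1
      have h4 : p ∣ (m + 1) := by exact_mod_cast h3
      have := Nat.le_of_dvd (by omega) h4
      omega
  set a : ℕ → ℕ := fun j => (e j % p).toNat with hadef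
  set b : ℕ → ℕ := fun j => ((-e j) % p).toNat with hbdef
  have hbounds : ∀ j < m, (1 ≤ a j ∧ a j ≤ p - 1) ∧ (1 ≤ b j ∧ b j ≤ p - 1) := by
    intro j hj
    have hpne : (p:ℤ) ≠ 0 := by exact_mod_cast hp.pos.ne'
    have h1 := Int.emod_nonneg (e j) hpne
    have h2 := Int.emod_lt_of_pos (e j) (by exact_mod_cast hp.pos : (0:ℤ) < p)
    have h3 := Int.emod_nonneg (-e j) hpne
    have h4 := Int.emod_lt_of_pos (-e j) (by exact_mod_cast hp.pos : (0:ℤ) < p)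
    have h5 : e j % p ≠ 0 := fun hc => hndvd j hj (Int.dvd_of_emod_eq_zero hc)
    have h6 : (-e j) % p ≠ 0 := by
      intro hc
      exact hndvd j hj ((dvd_neg).mp (Int.dvd_of_emod_eq_zero hc))
    simp only [hadef, hbdef]
    constructor <;> constructor <;> omega
  set P : ℚ[X] := ∑ j ∈ Finset.range m, C (s j : ℚ) * (X ^ a j + X ^ b j) with hPdef
  have haeval : (aeval η) P = 0 := by
    rw [hPdef, map_sum, ← hsum]
    refine Finset.sum_congr rfl fun j hj => ?_
    rw [map_mul, map_add, map_pow, map_pow, aeval_X, aeval_C]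
    simp only [hadef, hbdef]
    rw [hzmod, hzmod]
    norm_cast
  have hmin : minpoly ℚ η = cyclotomic p ℚ := (cyclotomic_eq_minpoly_rat hη hp.pos).symm
  have hdvd : cyclotomic p ℚ ∣ P := by
    rw [← hmin]
    exact minpoly.dvd ℚ η haeval
  have hcoeff0 : P.coeff 0 = 0 := by
    rw [hPdef, finset_sum_coeff]
    refine Finset.sum_eq_zero fun j hj => ?_
    rw [coeff_C_mul, coeff_add, coeff_X_pow, coeff_X_pow]
    have := (hbounds j (Finset.mem_range.mp hj))
    rw [if_neg (by omega), if_neg (by omega)]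
    ring
  have hXdvd : cyclotomic p ℚ * X ∣ P := by
    obtain ⟨Q, hQ⟩ := hdvd
    have hQ0 : Q.coeff 0 = 0 := by
      have : P.coeff 0 = (cyclotomic p ℚ).coeff 0 * Q.coeff 0 := by
        rw [hQ, mul_coeff_zero]
      rw [cyclotomic_coeff_zero ℚ (by omega : 1 < p), one_mul] at this
      rw [← this, hcoeff0]
    obtain ⟨R, hR⟩ := Polynomial.X_dvd_iff.mpr hQ0
    exact ⟨R, by rw [hQ, hR, mul_assoc]⟩
  have hPdeg : P.natDegree ≤ p - 1 := by
    rw [hPdef]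
    refine Polynomial.natDegree_sum_le_of_forall_le _ _ fun j hj => ?_
    refine le_trans (Polynomial.natDegree_C_mul_le _ _) ?_
    refine le_trans (Polynomial.natDegree_add_le _ _) ?_
    have := hbounds j (Finset.mem_range.mp hj)
    simp only [Polynomial.natDegree_X_pow]
    omega
  have hP0 : P = 0 := by
    by_contra hP0
    have hle := Polynomial.natDegree_le_of_dvd hXdvd hP0
    have hcdeg : (cyclotomic p ℚ).natDegree = p - 1 := by
      rw [Polynomial.natDegree_cyclotomic, Nat.totient_prime hp]
    rw [Polynomial.natDegree_mul (cyclotomic_ne_zero p ℚ) Polynomial.X_ne_zero,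
      hcdeg, Polynomial.natDegree_X] at hle
    omega
  intro j hj
  have hc : P.coeff (a j) = 0 := by rw [hP0, Polynomial.coeff_zero]
  have hle : (s j : ℚ) ≤ P.coeff (a j) := by
    rw [hPdef, finset_sum_coeff]
    have hnn : ∀ i ∈ Finset.range m,
        (0:ℚ) ≤ (C ((s i : ℚ)) * (X ^ a i + X ^ b i)).coeff (a j) := by
      intro i _
      rw [coeff_C_mul, coeff_add, coeff_X_pow, coeff_X_pow]
      have : (0:ℚ) ≤ (if a i = a j then (1:ℚ) else 0) + (if b i = a j then (1:ℚ) else 0) := by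
        split <;> split <;> norm_num
      positivity
    refine le_trans ?_ (Finset.single_le_sum hnn (Finset.mem_range.mpr hj))
    rw [coeff_C_mul, coeff_add, coeff_X_pow, coeff_X_pow, if_pos rfl]
    have hnn2 := Nat.cast_nonneg (α := ℚ) (s j)
    split
    · nlinarith
    · simp
  rw [hc] at hle
  have : (s j : ℚ) = 0 := le_antisymm hle (Nat.cast_nonneg _)
  exact_mod_cast this
end

section
/- Let p be an odd prime, l coprime to p, θ = (l/p)π, and let s_1, …, s_{(p+1)/2} be nonnegative integers with s_{(p+1)/2} ≥ 1 such that Σ_{j=1}^{(p+1)/2} s_j cos((2j−1)θ) = 0. Then Σ_{j=1}^{(p+1)/2} s_j ≥ p, with equality attained by (s_1, …, s_{(p−1)/2}, s_{(p+1)/2}) = (2, …, 2, 1). -/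
open Polynomial in
theorem coeffs_eq_of_prim_root {p : ℕ} (hp : p.Prime) {ζ : ℂ}
    (hζ : IsPrimitiveRoot ζ p) (a : ℕ → ℚ)
    (h : ∑ k ∈ Finset.range p, (a k : ℂ) * ζ ^ k = 0) :
    ∀ k < p, a k = a (p - 1) := by
  have hp1 : 1 < p := hp.one_lt
  set b : ℕ → ℚ := fun k => a k - a (p - 1) with hb
  have hgeom : ∑ k ∈ Finset.range p, ζ ^ k = 0 := hζ.geom_sum_eq_zero hp1
  have h2 : ∑ k ∈ Finset.range p, (b k : ℂ) * ζ ^ k = 0 := by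
    have : ∑ k ∈ Finset.range p, (b k : ℂ) * ζ ^ k
        = (∑ k ∈ Finset.range p, (a k : ℂ) * ζ ^ k)
          - (a (p-1) : ℂ) * ∑ k ∈ Finset.range p, ζ ^ k := by
      rw [Finset.mul_sum, ← Finset.sum_sub_distrib]
      refine Finset.sum_congr rfl fun k _ => by push_cast [hb]; ring
    rw [this, h, hgeom, mul_zero, sub_zero]
  have hlast : b (p - 1) = 0 := by simp [hb]
  have h3 : ∑ k ∈ Finset.range (p - 1), (b k : ℂ) * ζ ^ k = 0 := by
    have hps : p = (p - 1) + 1 := by omega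
    rw [hps, Finset.sum_range_succ, hlast] at h2
    simpa using h2
  set q : ℚ[X] := ∑ k ∈ Finset.range (p - 1), C (b k) * X ^ k with hq
  have haev : aeval ζ q = 0 := by
    rw [hq, map_sum]
    simpa using h3
  have hmin : minpoly ℚ ζ = cyclotomic p ℚ :=
    (cyclotomic_eq_minpoly_rat hζ hp.pos).symm
  have hq0 : q = 0 := by
    by_contra hne
    have hdvd : minpoly ℚ ζ ∣ q := minpoly.dvd ℚ ζ haev
    have hdeg := Polynomial.natDegree_le_of_dvd hdvd hne
    rw [hmin, natDegree_cyclotomic, Nat.totient_prime hp] at hdeg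
    have hle : q.natDegree ≤ p - 2 := by
      refine Polynomial.natDegree_sum_le_of_forall_le _ _ fun i hi => ?_
      refine (natDegree_C_mul_le _ _).trans ?_
      rw [natDegree_X_pow]
      have := Finset.mem_range.mp hi; omega
    omega
  intro k hk
  by_cases hk1 : k = p - 1
  · rw [hk1]
  · have hlt : k < p - 1 := by omega
    have hco : q.coeff k = b k := by
      rw [hq, Polynomial.finset_sum_coeff]
      rw [Finset.sum_eq_single k]
      · simp
      · intro j _ hj; simp [Polynomial.coeff_C_mul, Polynomial.coeff_X_pow, Ne.symm hj]
      · intro hnk; exact absurd (Finset.mem_range.mpr hlt) hnk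
    rw [hq0] at hco
    have : b k = 0 := by simpa using hco.symm
    simpa [hb, sub_eq_zero] using this

open Complex in
lemma exp_I_add_exp_neg_I (x : ℝ) :
    Complex.exp (x * I) + Complex.exp (-((x : ℂ) * I)) = 2 * (Real.cos x : ℂ) := by
  rw [show -((x:ℂ) * I) = ((-x : ℝ) : ℂ) * I by push_cast; ring,
    Complex.exp_mul_I, Complex.exp_mul_I]
  simp only [← Complex.ofReal_cos, ← Complex.ofReal_sin, Real.cos_neg, Real.sin_neg]
  push_cast
  ring

open Complex in
lemma master_identity {p n : ℕ} (hn2 : 2 * n = p + 1) (θ : ℝ)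
    (hζp : Complex.exp (2 * θ * I) ^ p = 1) (c : ℕ → ℝ) :
    (∑ k ∈ Finset.range p,
        ((if k < n then (c k : ℂ) else 0) + (if n - 1 ≤ k then (c (p - 1 - k) : ℂ) else 0))
          * Complex.exp (2 * θ * I) ^ k) * Complex.exp (θ * I)
      = 2 * ((∑ j ∈ Finset.range n, c j * Real.cos ((2 * j + 1) * θ) : ℝ) : ℂ) := by
  have hn : n ≤ p := by omega
  set ζ : ℂ := Complex.exp (2 * θ * I) with hζ
  have h1 : ∑ k ∈ Finset.range p, (if k < n then (c k : ℂ) else 0) * ζ ^ k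
      = ∑ j ∈ Finset.range n, (c j : ℂ) * ζ ^ j := by
    rw [← Finset.sum_subset (Finset.range_subset_range.mpr hn)
      (fun k _ hk => by simp [Finset.mem_range.not.mp hk])]
    exact Finset.sum_congr rfl fun j hj => by simp [Finset.mem_range.mp hj]
  have h2 : ∑ k ∈ Finset.range p, (if n - 1 ≤ k then (c (p - 1 - k) : ℂ) else 0) * ζ ^ k
      = ∑ j ∈ Finset.range n, (c j : ℂ) * ζ ^ (p - 1 - j) := by
    rw [← Finset.sum_subset
      (fun x hx => Finset.mem_range.mpr (Finset.mem_Ico.mp hx).2 :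
        Finset.Ico (n - 1) p ⊆ Finset.range p)
      (fun k _ hk => by
        have := Finset.mem_Ico.not.mp hk
        simp only [Finset.mem_range] at *
        have : ¬ (n - 1 ≤ k) := by intro h; exact hk (Finset.mem_Ico.mpr ⟨h, by assumption⟩)
        simp [this])]
    refine (Finset.sum_nbij' (fun j => p - 1 - j) (fun k => p - 1 - k) ?_ ?_ ?_ ?_ ?_).symm
    · intro j hj
      have := Finset.mem_range.mp hj
      exact Finset.mem_Ico.mpr ⟨by omega, by omega⟩
    · intro k hk
      have := Finset.mem_Ico.mp hk
      exact Finset.mem_range.mpr (by omega)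
    · intro j hj; have := Finset.mem_range.mp hj; omega
    · intro k hk; have := Finset.mem_Ico.mp hk; omega
    · intro j hj
      have hjn := Finset.mem_range.mp hj
      have : p - 1 - (p - 1 - j) = j := by omega
      rw [if_pos (by omega : n - 1 ≤ p - 1 - j), this]
  calc (∑ k ∈ Finset.range p,
        ((if k < n then (c k : ℂ) else 0) + (if n - 1 ≤ k then (c (p - 1 - k) : ℂ) else 0))
          * ζ ^ k) * Complex.exp (θ * I)
      = (∑ j ∈ Finset.range n, ((c j : ℂ) * ζ ^ j + (c j : ℂ) * ζ ^ (p - 1 - j)))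
          * Complex.exp (θ * I) := by
        rw [Finset.sum_add_distrib, ← h1, ← h2, ← Finset.sum_add_distrib]
        congr 1
        exact Finset.sum_congr rfl fun k _ => by ring
    _ = ∑ j ∈ Finset.range n, (c j : ℂ) * (2 * (Real.cos ((2 * j + 1) * θ) : ℂ)) := by
        rw [Finset.sum_mul]
        refine Finset.sum_congr rfl fun j hj => ?_
        have hjp : j < p := lt_of_lt_of_le (Finset.mem_range.mp hj) hn
        have e1 : ζ ^ j * Complex.exp (θ * I)
            = Complex.exp ((((2 * j + 1) * θ : ℝ) : ℂ) * I) := by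
          rw [hζ, ← Complex.exp_nat_mul, ← Complex.exp_add]
          congr 1; push_cast; ring
        have e2 : ζ ^ (p - 1 - j) * Complex.exp (θ * I)
            = Complex.exp (-((((2 * j + 1) * θ : ℝ) : ℂ) * I)) := by
          rw [hζ, ← Complex.exp_nat_mul, ← Complex.exp_add,
            show ((p - 1 - j : ℕ) : ℂ) * (2 * θ * I) + θ * I
              = (p : ℕ) * (2 * θ * I) + -((((2 * j + 1) * θ : ℝ) : ℂ) * I) by
                push_cast [Nat.cast_sub (by omega : j ≤ p - 1), Nat.cast_sub (by omega : 1 ≤ p)]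
                ring,
            Complex.exp_add, Complex.exp_nat_mul, ← hζ, hζp, one_mul]
        rw [add_mul, mul_assoc, mul_assoc, e1, e2, ← mul_add, exp_I_add_exp_neg_I]
    _ = 2 * ((∑ j ∈ Finset.range n, c j * Real.cos ((2 * j + 1) * θ) : ℝ) : ℂ) := by
        push_cast
        rw [Finset.mul_sum]
        exact Finset.sum_congr rfl fun j _ => by ring

open Complex in
theorem odd_prime_min_sheets (p : ℕ) (hp : p.Prime) (hodd : Odd p)
    (l : ℤ) (hl : IsCoprime l (p : ℤ)) (θ : ℝ) (hθ : θ = (l : ℝ) / p * Real.pi) :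
    (∀ s : ℕ → ℕ, 1 ≤ s ((p + 1) / 2 - 1) →
      (∑ j ∈ Finset.range ((p + 1) / 2), (s j : ℝ) * Real.cos ((2 * j + 1) * θ)) = 0 →
      p ≤ ∑ j ∈ Finset.range ((p + 1) / 2), s j) ∧
    ((∑ j ∈ Finset.range ((p + 1) / 2),
        ((if j = (p + 1) / 2 - 1 then (1 : ℕ) else 2) : ℝ) * Real.cos ((2 * j + 1) * θ)) = 0 ∧
      (∑ j ∈ Finset.range ((p + 1) / 2), (if j = (p + 1) / 2 - 1 then (1 : ℕ) else 2)) = p) := by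
  have hp2 : p ≠ 2 := by rintro rfl; exact (by norm_num : ¬ Odd 2) hodd
  have hp3 : 3 ≤ p := by
    have := hp.two_le
    rcases Nat.lt_or_ge p 3 with h | h
    · interval_cases p <;> simp_all
    · exact h
  set n : ℕ := (p + 1) / 2 with hn
  have hn2 : 2 * n = p + 1 := by
    obtain ⟨m, hm⟩ := hodd
    omega
  -- primitive root
  have hpne : (p : ℂ) ≠ 0 := Nat.cast_ne_zero.mpr hp.ne_zero
  have hprim0 : IsPrimitiveRoot (Complex.exp (2 * Real.pi * I / p)) p :=
    Complex.isPrimitiveRoot_exp p hp.ne_zero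
  have hgcd : Int.gcd l p = 1 := Int.isCoprime_iff_gcd_eq_one.mp hl
  have hprim1 := hprim0.zpow_of_gcd_eq_one l hgcd
  have hexp : Complex.exp (2 * Real.pi * I / p) ^ (l : ℤ) = Complex.exp (2 * θ * I) := by
    rw [← Complex.exp_int_mul]
    congr 1
    have hθC : (θ : ℂ) = (l : ℂ) / (p : ℂ) * (Real.pi : ℂ) := by
      rw [hθ]; push_cast; ring
    rw [hθC]; field_simp
  rw [hexp] at hprim1
  set ζ : ℂ := Complex.exp (2 * θ * I) with hζ
  have hζp : ζ ^ p = 1 := hprim1.pow_eq_one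
  have hexpne : Complex.exp (θ * I) ≠ 0 := Complex.exp_ne_zero _
  constructor
  · -- lower bound
    intro s hs1 hsum
    have hmaster := master_identity hn2 θ hζp (fun j => (s j : ℝ))
    rw [hsum] at hmaster
    simp only [Complex.ofReal_zero, mul_zero] at hmaster
    have hzero : ∑ k ∈ Finset.range p,
        ((if k < n then ((s k : ℝ) : ℂ) else 0)
          + (if n - 1 ≤ k then ((s (p - 1 - k) : ℝ) : ℂ) else 0)) * ζ ^ k = 0 :=
      (mul_eq_zero.mp hmaster).resolve_right hexpne
    set aQ : ℕ → ℚ := fun k =>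
      (if k < n then (s k : ℚ) else 0) + (if n - 1 ≤ k then (s (p - 1 - k) : ℚ) else 0) with haQ
    have hzeroQ : ∑ k ∈ Finset.range p, (aQ k : ℂ) * ζ ^ k = 0 := by
      rw [← hzero]
      refine Finset.sum_congr rfl fun k _ => ?_
      congr 1
      simp only [haQ]
      split_ifs <;> push_cast <;> ring
    have hkey := coeffs_eq_of_prim_root hp hprim1 aQ hzeroQ
    have haPlast : aQ (p - 1) = (s 0 : ℚ) := by
      simp only [haQ]
      rw [if_neg (by omega), if_pos (by omega), Nat.sub_self]
      norm_num
    have hs0 : ∀ k < n - 1, s k = s 0 := by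
      intro k hk
      have := hkey k (by omega)
      rw [haPlast] at this
      simp only [haQ, if_pos (by omega : k < n), if_neg (by omega : ¬ n - 1 ≤ k),
        add_zero] at this
      exact_mod_cast this
    have hmid : s 0 = 2 * s (n - 1) := by
      have := hkey (n - 1) (by omega)
      rw [haPlast] at this
      simp only [haQ, if_pos (by omega : n - 1 < n), if_pos (le_refl (n - 1))] at this
      have hpn : p - 1 - (n - 1) = n - 1 := by omega
      rw [hpn] at this
      have : ((2 * s (n - 1) : ℕ) : ℚ) = (s 0 : ℚ) := by push_cast; linarith
      exact_mod_cast this.symm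
    have hsum2 : ∑ j ∈ Finset.range n, s j = (n - 1) * s 0 + s (n - 1) := by
      have hnsucc : n = (n - 1) + 1 := by omega
      rw [hnsucc, Finset.sum_range_succ, ← hnsucc]
      congr 1
      rw [Finset.sum_congr rfl fun j hj => hs0 j (Finset.mem_range.mp hj)]
      simp [mul_comm]
    rw [hsum2, hmid]
    calc p = p * 1 := (mul_one p).symm
      _ ≤ p * s (n - 1) := Nat.mul_le_mul_left p hs1
      _ = (n - 1) * (2 * s (n - 1)) + s (n - 1) := by
          have : p = 2 * (n - 1) + 1 := by omega
          rw [this]; ring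
  · -- equality case
    constructor
    · have hmaster := master_identity hn2 θ hζp
        (fun j => ((if j = n - 1 then (1 : ℕ) else 2) : ℝ))
      have hA : ∀ k ∈ Finset.range p,
          ((if k < n then (((if k = n - 1 then (1 : ℕ) else 2) : ℝ) : ℂ) else 0)
            + (if n - 1 ≤ k then (((if p - 1 - k = n - 1 then (1 : ℕ) else 2) : ℝ) : ℂ) else 0))
            * ζ ^ k = 2 * ζ ^ k := by
        intro k hk
        have hkp := Finset.mem_range.mp hk
        congr 1
        rcases lt_trichotomy k (n - 1) with h | h | h
        · rw [if_pos (by omega), if_neg (by omega), if_neg (by omega)]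
          norm_num
        · rw [if_pos (by omega), if_pos (by omega), if_pos (by omega), if_pos (by omega)]
          norm_num
        · rw [if_neg (by omega), if_pos (by omega), if_neg (by omega)]
          norm_num
      rw [Finset.sum_congr rfl hA, ← Finset.mul_sum, hprim1.geom_sum_eq_zero hp.one_lt,
        mul_zero, zero_mul] at hmaster
      have h2 := (mul_eq_zero.mp hmaster.symm).resolve_left (by norm_num : (2:ℂ) ≠ 0)
      exact_mod_cast h2
    · have hnsucc : n = (n - 1) + 1 := by omega
      rw [hnsucc, Finset.sum_range_succ]
      simp only [Nat.add_sub_cancel]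
      rw [if_pos trivial]
      rw [Finset.sum_congr rfl (fun j hj =>
        if_neg (by have := Finset.mem_range.mp hj; omega))]
      simp only [Finset.sum_const, Finset.card_range, smul_eq_mul]
      omega
end

section
/- Let θ = (l/9)π with gcd(l, 9) = 1, and let x = e^{2πi l/9}, a primitive 9th root of unity (satisfying x^6 + x^3 + 1 = 0). For nonnegative integers s_1, s_2, s_3, s_4: Σ_{j=1}^{4} s_j cos((2j−1)θ) = 0 if and only if s_1 = s_3 = s_4 and s_2 = 0. In particular Σ_{j=1}^{3} s_j cos((2j−1)θ) = 0 forces s_1 = s_2 = s_3 = 0. -/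
/-!
Put `t = 2 cos θ` and `ε = 2 cos 3θ = t³ - 3t`. Since `3 ∤ l`, `3θ` is an odd multiple of `π/3`
plus a multiple of `π`, so `ε = ±1`. The cubic `X³ - 3X - ε` has no rational root (the rational
root theorem leaves only `±1`), hence is irreducible over `ℚ`, so `1, t, t²` are linearly
independent over `ℚ`. With `ε² = 1` and `t³ = 3t + ε`, twice the combination reduces to
`ε (s₃ - s₄) t² + (s₁ - s₃) t + ε (s₂ - 2 s₃ + 2 s₄)`, and all three coefficients must vanish.
-/

open Polynomial Real

lemma Polynomial.eq_zero_of_aeval_eq_zero_of_degree_lt {K L : Type*} [Field K] [Ring L]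
    [Nontrivial L] [Algebra K L] {p q : K[X]} {x : L} (hirr : Irreducible p) (hmonic : p.Monic)
    (hpx : aeval x p = 0) (hqx : aeval x q = 0) (hdeg : q.degree < p.degree) : q = 0 := by
  by_contra hq
  rw [minpoly.eq_of_irreducible_of_monic hirr hpx hmonic] at hdeg
  exact (minpoly.degree_le_of_ne_zero K x hq hqx).not_gt hdeg

lemma irreducible_X_pow_three_sub_three_mul_X_sub_C {e : ℤ} (he : IsUnit e) :
    Irreducible (X ^ 3 - 3 * X - C (e : ℚ)) := by
  have hdeg : (X ^ 3 - 3 * X - C (e : ℚ)).natDegree = 3 := by compute_degree!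
  refine irreducible_of_degree_le_three_of_not_isRoot (by rw [hdeg]; decide) fun r hr => ?_
  have hroot : aeval r (X ^ 3 - 3 * X - C e : ℤ[X]) = 0 := by simpa [map_ofNat] using hr
  obtain ⟨n, rfl, hn⟩ := exists_integer_of_is_root_of_monic (by monicity!) hroot
  have hn : IsUnit n := isUnit_of_dvd_unit (by simpa using hn) he.neg
  have hcube : (n : ℚ) ^ 3 - 3 * n - e = 0 := by simpa [map_ofNat] using hroot
  rcases Int.isUnit_iff.mp hn with rfl | rfl <;> rcases Int.isUnit_iff.mp he with rfl | rfl <;>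
    norm_num at hcube

lemma eq_zero_of_mul_sq_add_mul_add_eq_zero {L : Type*} [Field L] [CharZero L] {t : L} {e : ℤ}
    (he : IsUnit e) (ht : t ^ 3 - 3 * t = e) {a b c : ℤ} (h : a * t ^ 2 + b * t + c = 0) :
    a = 0 ∧ b = 0 ∧ c = 0 := by
  have hq : C (a : ℚ) * X ^ 2 + C (b : ℚ) * X + C (c : ℚ) = 0 := by
    refine eq_zero_of_aeval_eq_zero_of_degree_lt (x := t)
      (irreducible_X_pow_three_sub_three_mul_X_sub_C he) (by monicity!) ?_ ?_ ?_
    · simp [map_ofNat, ht]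
    · simpa using h
    · calc (C (a : ℚ) * X ^ 2 + C (b : ℚ) * X + C (c : ℚ)).degree
          ≤ (2 : WithBot ℕ) := by compute_degree
        _ < 3 := by decide
        _ = (X ^ 3 - 3 * X - C (e : ℚ)).degree := by symm; compute_degree!
  have h2 := congrArg (coeff · 2) hq
  have h1 := congrArg (coeff · 1) hq
  have h0 := congrArg (coeff · 0) hq
  simp only [coeff_add, coeff_C_mul_X_pow, coeff_C_mul_X, coeff_C, coeff_zero] at h2 h1 h0
  norm_num at h2 h1 h0
  exact ⟨h2, h1, h0⟩

lemma two_cos_three_mul (x : ℝ) : 2 * cos (3 * x) = (2 * cos x) ^ 3 - 3 * (2 * cos x) := by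
  rw [cos_three_mul]; ring

lemma two_cos_five_mul (x : ℝ) :
    2 * cos (5 * x) = 2 * cos (3 * x) * ((2 * cos x) ^ 2 - 2) - 2 * cos x := by
  have h := cos_add_cos (5 * x) x
  rw [show (5 * x + x) / 2 = 3 * x by ring, show (5 * x - x) / 2 = 2 * x by ring,
    cos_two_mul] at h
  linear_combination 2 * h

lemma two_cos_seven_mul (x : ℝ) :
    2 * cos (7 * x) = 2 * cos (3 * x) * (((2 * cos x) ^ 2 - 2) ^ 2 - 2) - 2 * cos x := by
  have h := cos_add_cos (7 * x) x
  rw [show (7 * x + x) / 2 = 2 * (2 * x) by ring, show (7 * x - x) / 2 = 3 * x by ring,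
    cos_two_mul, cos_two_mul] at h
  linear_combination 2 * h

lemma two_mul_cos_combination_eq (θ s₁ s₂ s₃ s₄ : ℝ) (h : (2 * cos (3 * θ)) ^ 2 = 1) :
    2 * (s₁ * cos θ + s₂ * cos (3 * θ) + s₃ * cos (5 * θ) + s₄ * cos (7 * θ)) =
      2 * cos (3 * θ) * (s₃ - s₄) * (2 * cos θ) ^ 2 + (s₁ - s₃) * (2 * cos θ)
        + 2 * cos (3 * θ) * (s₂ - 2 * s₃ + 2 * s₄) := by
  linear_combination s₃ * two_cos_five_mul θ + s₄ * two_cos_seven_mul θ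
    - s₄ * 2 * cos (3 * θ) * 2 * cos θ * two_cos_three_mul θ + s₄ * 2 * cos θ * h

lemma exists_isUnit_eq_two_cos_nat_mul_pi_div_three (l : ℕ) (hl : ¬ 3 ∣ l) :
    ∃ e : ℤ, IsUnit e ∧ 2 * cos (l * π / 3) = e := by
  obtain ⟨m, rfl | rfl⟩ : ∃ m, l = 3 * m + 1 ∨ l = 3 * (m + 1) - 1 := ⟨l / 3, by omega⟩
  · refine ⟨(-1) ^ m, isUnit_neg_one.pow m, ?_⟩
    rw [show ((3 * m + 1 : ℕ) : ℝ) * π / 3 = π / 3 + m * π by push_cast; ring,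
      cos_add_nat_mul_pi, cos_pi_div_three]
    push_cast; ring
  · refine ⟨(-1) ^ (m + 1), isUnit_neg_one.pow (m + 1), ?_⟩
    rw [show ((3 * (m + 1) - 1 : ℕ) : ℝ) * π / 3 = ((m + 1 : ℕ) : ℝ) * π - π / 3 by
      rw [Nat.cast_sub (by omega)]; push_cast; ring, cos_nat_mul_pi_sub, cos_pi_div_three]
    push_cast; ring

theorem nine_cos_combination (l : ℕ) (hl : Nat.Coprime l 9)
    (θ : ℝ) (hθ : θ = (l : ℝ) * Real.pi / 9) :
    (∀ s₁ s₂ s₃ s₄ : ℕ,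
      ((s₁ : ℝ) * Real.cos θ + (s₂ : ℝ) * Real.cos (3 * θ)
        + (s₃ : ℝ) * Real.cos (5 * θ) + (s₄ : ℝ) * Real.cos (7 * θ) = 0
        ↔ (s₁ = s₃ ∧ s₃ = s₄ ∧ s₂ = 0))) ∧
    (∀ s₁ s₂ s₃ : ℕ,
      (s₁ : ℝ) * Real.cos θ + (s₂ : ℝ) * Real.cos (3 * θ)
        + (s₃ : ℝ) * Real.cos (5 * θ) = 0 → s₁ = 0 ∧ s₂ = 0 ∧ s₃ = 0) := by
  have hl3 : ¬ 3 ∣ l := (Nat.Prime.coprime_iff_not_dvd Nat.prime_three).mp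
    (Nat.Coprime.coprime_dvd_right (by norm_num) hl).symm
  obtain ⟨e, he, h3⟩ : ∃ e : ℤ, IsUnit e ∧ 2 * cos (3 * θ) = e := by
    rw [hθ, show 3 * (l * π / 9) = l * π / 3 by ring]
    exact exists_isUnit_eq_two_cos_nat_mul_pi_div_three l hl3
  have ht : (2 * cos θ) ^ 3 - 3 * (2 * cos θ) = e := by rw [← two_cos_three_mul, h3]
  have hsq : (2 * cos (3 * θ)) ^ 2 = 1 := by rw [h3]; exact_mod_cast Int.isUnit_sq he
  have hfour : ∀ s₁ s₂ s₃ s₄ : ℕ,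
      ((s₁ : ℝ) * cos θ + (s₂ : ℝ) * cos (3 * θ)
        + (s₃ : ℝ) * cos (5 * θ) + (s₄ : ℝ) * cos (7 * θ) = 0
        ↔ (s₁ = s₃ ∧ s₃ = s₄ ∧ s₂ = 0)) := by
    intro s₁ s₂ s₃ s₄
    rw [← mul_eq_zero_iff_left two_ne_zero, two_mul_cos_combination_eq θ _ _ _ _ hsq, h3]
    constructor
    · intro h
      obtain ⟨ha, hb, hc⟩ := eq_zero_of_mul_sq_add_mul_add_eq_zero he ht
        (a := e * (s₃ - s₄)) (b := s₁ - s₃) (c := e * (s₂ - 2 * s₃ + 2 * s₄))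
        (by push_cast; exact h)
      rcases Int.isUnit_iff.mp he with rfl | rfl <;> omega
    · rintro ⟨rfl, rfl, rfl⟩
      simp
  refine ⟨hfour, fun s₁ s₂ s₃ h => ?_⟩
  have := (hfour s₁ s₂ s₃ 0).mp (by simpa using h)
  omega
end
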